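/- arXiv:2003.13061 — 3 statements merged into one kernel-verified Lean document; each statement's English description precedes it below -/
import Mathlib

section
/- A relative ideal I of a numerical semigroup S is almost canonical if and only if K − (M − M) ⊆ Ĩ. -/
open Set Pointwise

def IsNumSgrp (S : Set ℤ) : Prop :=
  0 ∈ S ∧ (∀ a ∈ S, ∀ b ∈ S, a + b ∈ S) ∧ (∀ a ∈ S, 0 ≤ a) ∧ ∃ c : ℤ, ∀ z, c ≤ z → z ∈ S

def maxId (S : Set ℤ) : Set ℤ := S \ {0}

def subI (I J : Set ℤ) : Set ℤ := {x : ℤ | ∀ j ∈ J, x + j ∈ I}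

def PF (S I : Set ℤ) : Set ℤ := subI I (maxId S) \ I

def stdK (S : Set ℤ) (F : ℤ) : Set ℤ := {x : ℤ | 0 ≤ x ∧ F - x ∉ S}

def IsFrobOf (I : Set ℤ) (FI : ℤ) : Prop := FI ∉ I ∧ ∀ z : ℤ, FI < z → z ∈ I

def IsRelIdeal (S I : Set ℤ) : Prop :=
  I.Nonempty ∧ (∀ i ∈ I, ∀ s ∈ S, i + s ∈ I) ∧ ∃ z ∈ S, ∀ i ∈ I, z + i ∈ S

def tilde (I : Set ℤ) (d : ℤ) : Set ℤ := (fun x => x + d) '' I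

def IsAlmostCanonical (S : Set ℤ) (F : ℤ) (I : Set ℤ) : Prop :=
  ∃ FI : ℤ, IsFrobOf I FI ∧ subI (tilde I (F - FI)) (maxId S) = stdK S F ∪ {F}

def IsMinGen (S : Set ℤ) (x : ℤ) : Prop := x ∈ maxId S \ (maxId S + maxId S)

def IsMult (S : Set ℤ) (e : ℤ) : Prop := e ∈ maxId S ∧ ∀ m ∈ maxId S, e ≤ m

def genK (S : Set ℤ) (F : ℤ) : Set ℤ := (AddSubmonoid.closure (stdK S F) : Set ℤ)

def nK (K : Set ℤ) : ℕ → Set ℤ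
  | 0 => {0}
  | 1 => K
  | n + 2 => nK K (n + 1) + K

def IsGAS (S : Set ℤ) (F : ℤ) : Prop :=
  stdK S F + stdK S F = stdK S F ∨
  ∃ X : Finset ℤ, (∀ x ∈ X, IsMinGen S x) ∧ (∀ x ∈ X, ∀ y ∈ X, x - y ∉ PF S S) ∧
    (stdK S F + stdK S F) \ stdK S F = (fun x => F - x) '' (X : Set ℤ) ∪ {F}

def IsAlmostSym (S : Set ℤ) (F : ℤ) : Prop := subI S (maxId S) = stdK S F ∪ {F}

def apery (I : Set ℤ) (e : ℤ) : Set ℤ := {i ∈ I | i - e ∉ I}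

/-!
Write `J = Ĩ`, so that `F ∉ J` and `x ∈ K ∪ {F} ↔ F - x ∉ M`; the latter shows `J - M ⊆ K ∪ {F}`
for every such `J`. Conversely `(K ∪ {F}) + M ⊆ K - (M - M)`, because `F - x ∈ S` would follow
from `F - (x + m + z) ∈ S` by adding `z + m ∈ M`. Hence `K - (M - M) ⊆ J` gives
`K ∪ {F} ⊆ J - M`. If instead `J - M = K ∪ {F}` and `y ∈ K - (M - M)`, then `F - y ∉ M - M`
(as `F ∉ K`), so `F - y + m ∉ M` for some `m ∈ M`, i.e. `y - m ∈ J - M`, whence `y ∈ J`.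
-/

theorem IsFrobOf.unique {I : Set ℤ} {a b : ℤ} (ha : IsFrobOf I a) (hb : IsFrobOf I b) :
    a = b := by
  by_contra hne
  rcases lt_or_gt_of_ne hne with h | h
  · exact hb.1 (ha.2 b h)
  · exact ha.1 (hb.2 a h)

theorem add_mem_tilde_iff {I : Set ℤ} {x d : ℤ} : x + d ∈ tilde I d ↔ x ∈ I := by
  simp [tilde]

theorem subI_mono_left {I J : Set ℤ} (h : I ⊆ J) (L : Set ℤ) : subI I L ⊆ subI J L :=
  fun _ hx l hl => h (hx l hl)

section Canonical

variable {S : Set ℤ} {F : ℤ}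

theorem mem_stdK_iff (hF : IsFrobOf S F) {x : ℤ} : x ∈ stdK S F ↔ F - x ∉ S :=
  ⟨And.right, fun h => ⟨by by_contra hx; exact h (hF.2 _ (by omega)), h⟩⟩

theorem mem_stdK_union_singleton_iff (hF : IsFrobOf S F) {x : ℤ} :
    x ∈ stdK S F ∪ {F} ↔ F - x ∉ maxId S := by
  simp only [mem_union, mem_singleton_iff, mem_stdK_iff hF, maxId, mem_sdiff, not_and, not_not]
  constructor
  · rintro (h | rfl)
    · exact fun h' => absurd h' h
    · exact fun _ => sub_self _
  · intro h
    by_cases hx : F - x ∈ S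
    · exact Or.inr (by linarith [h hx])
    · exact Or.inl hx

theorem subI_maxId_subset_stdK_union_singleton (hF : IsFrobOf S F) {J : Set ℤ} (hJ : F ∉ J) :
    subI J (maxId S) ⊆ stdK S F ∪ {F} := by
  intro x hx
  rw [mem_stdK_union_singleton_iff hF]
  intro hFx
  exact hJ (by simpa using hx _ hFx)

theorem stdK_union_singleton_subset (hS : IsNumSgrp S) (hF : IsFrobOf S F) :
    stdK S F ∪ {F} ⊆ subI (subI (stdK S F) (subI (maxId S) (maxId S))) (maxId S) := by
  obtain ⟨-, hadd, hnonneg, -⟩ := hS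
  intro x hx m hm z hz
  rw [mem_stdK_union_singleton_iff hF] at hx
  rw [mem_stdK_iff hF]
  intro hs
  obtain ⟨hzmS, hzm0⟩ := hz m hm
  have hzm_pos : 0 < z + m := lt_of_le_of_ne (hnonneg _ hzmS) (Ne.symm hzm0)
  refine hx ⟨?_, ?_⟩
  · rw [← show F - (x + m + z) + (z + m) = F - x by ring]
    exact hadd _ hs _ hzmS
  · have := hnonneg _ hs
    simp only [mem_singleton_iff]
    omega

theorem subI_stdK_subset_of_subI_maxId_eq (h0 : (0 : ℤ) ∈ S) (hF : IsFrobOf S F) {J : Set ℤ}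
    (hJ : subI J (maxId S) = stdK S F ∪ {F}) :
    subI (stdK S F) (subI (maxId S) (maxId S)) ⊆ J := by
  intro y hy
  have hFy : F - y ∉ subI (maxId S) (maxId S) := by
    intro h
    exact (mem_stdK_iff hF).1 (by simpa using hy _ h) (by simpa using h0)
  simp only [subI, mem_ofPred_eq, not_forall] at hFy
  obtain ⟨m, hm, hFym⟩ := hFy
  have hym : y - m ∈ subI J (maxId S) := by
    rw [hJ, mem_stdK_union_singleton_iff hF, show F - (y - m) = F - y + m by ring]
    exact hFym
  simpa using hym m hm

end Canonical

theorem stmt5_general (S : Set ℤ) (hS : IsNumSgrp S) (F : ℤ) (hF : IsFrobOf S F)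
    (I : Set ℤ) (FI : ℤ) (hFI : IsFrobOf I FI) :
    IsAlmostCanonical S F I ↔
      subI (stdK S F) (subI (maxId S) (maxId S)) ⊆ tilde I (F - FI) := by
  have hFJ : F ∉ tilde I (F - FI) := by
    simpa only [add_sub_cancel] using (add_mem_tilde_iff (d := F - FI)).not.2 hFI.1
  constructor
  · rintro ⟨FI', hFI', hJ⟩
    rw [hFI'.unique hFI] at hJ
    exact subI_stdK_subset_of_subI_maxId_eq hS.1 hF hJ
  · intro hsub
    refine ⟨FI, hFI, (subI_maxId_subset_stdK_union_singleton hF hFJ).antisymm ?_⟩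
    exact (stdK_union_singleton_subset hS hF).trans (subI_mono_left hsub _)

theorem stmt5 (S : Set ℤ) (hS : IsNumSgrp S) (F : ℤ) (hF : IsFrobOf S F) (hFpos : 0 < F)
    (I : Set ℤ) (hI : IsRelIdeal S I) (FI : ℤ) (hFI : IsFrobOf I FI) :
    IsAlmostCanonical S F I ↔
      subI (stdK S F) (subI (maxId S) (maxId S)) ⊆ tilde I (F - FI) :=
  stmt5_general S hS F hF I FI hFI
end

section
/- A numerical semigroup S is GAS if and only if either S is symmetric, or 2M ⊆ S − K ⊆ M and M − M = ((S − K) − M) ∪ {0}. -/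
open Set Pointwise

/-! Write `K = stdK S F` and `T = S − K`. Duality for `K` (`K − I = F − (ℤ \ I)` for an
`S`-module `I`, and `K − K = S`) gives `T = K − 2K`, hence `2K = F − (ℤ \ T)` and
`2K \ K = F − (S \ T)`. If `S` is not symmetric then `0 ∈ S \ T`, so `S` is GAS exactly when
every element of `M \ T` is a minimal generator and no difference of two of them is
pseudo-Frobenius. The first condition is `2M ⊆ T`; the second says `PF ⊆ T − M`, since if
`f + m ∉ T` for some `f ∈ PF`, `m ∈ M`, then `f + m` and `m` both lie in `M \ T`. Finally
`M − M = S − M = {0} ∪ M ∪ PF`, so `M − M = (T − M) ∪ {0}` says precisely `M ⊆ T − M`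
(that is, `2M ⊆ T`) and `PF ⊆ T − M`. -/

theorem mem_maxId {S : Set ℤ} {x : ℤ} : x ∈ maxId S ↔ x ∈ S ∧ x ≠ 0 := by
  simp [maxId]

theorem add_subset_iff_subset_subI {A B T : Set ℤ} : A + B ⊆ T ↔ A ⊆ subI T B := by
  constructor
  · exact fun h a ha b hb => h (add_mem_add ha hb)
  · rintro h _ ⟨a, ha, b, hb, rfl⟩
    exact h ha b hb

theorem subI_subI (I J L : Set ℤ) : subI (subI I J) L = subI I (L + J) := by
  ext x
  show (∀ l ∈ L, ∀ j ∈ J, x + l + j ∈ I) ↔ ∀ w ∈ L + J, x + w ∈ I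
  simp only [← image2_add, forall_mem_image2, add_assoc]

theorem image_sub_union_singleton_inj {F : ℤ} {A B : Set ℤ} (hA : 0 ∉ A) (hB : 0 ∉ B) :
    (fun x => F - x) '' A ∪ {F} = (fun x => F - x) '' B ∪ {F} ↔ A = B := by
  have h : ∀ C : Set ℤ, (fun x => F - x) '' C ∪ {F} = (fun x => F - x) '' (C ∪ {0}) :=
    fun C => by rw [image_union, image_singleton, sub_zero]
  rw [h, h, (image_injective.mpr sub_right_injective).eq_iff]
  refine ⟨fun hAB => ?_, fun hAB => hAB ▸ rfl⟩
  have := congrArg (· \ {(0 : ℤ)}) hAB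
  simpa [union_sdiff_right, sdiff_singleton_eq_self hA, sdiff_singleton_eq_self hB] using this

theorem mem_subI_stdK_of_lt {S : Set ℤ} {F z : ℤ} (hF : IsFrobOf S F) (hz : F < z) :
    z ∈ subI S (stdK S F) :=
  fun k hk => hF.2 _ (by linarith [hk.1])

namespace IsNumSgrp

variable {S : Set ℤ} {F : ℤ}

theorem pos_of_mem_maxId (hS : IsNumSgrp S) {m : ℤ} (hm : m ∈ maxId S) : 0 < m :=
  lt_of_le_of_ne (hS.2.2.1 m hm.1) (Ne.symm (mem_maxId.mp hm).2)

theorem add_maxId_subset (hS : IsNumSgrp S) : maxId S + maxId S ⊆ maxId S := by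
  rintro _ ⟨m, hm, m', hm', rfl⟩
  exact mem_maxId.mpr
    ⟨hS.2.1 m hm.1 m' hm'.1, (add_pos (hS.pos_of_mem_maxId hm) (hS.pos_of_mem_maxId hm')).ne'⟩

theorem subset_stdK (hS : IsNumSgrp S) (hFS : F ∉ S) : S ⊆ stdK S F := fun s hs =>
  ⟨hS.2.2.1 s hs, fun h => hFS (by simpa using hS.2.1 _ h _ hs)⟩

theorem stdK_add_mem (hS : IsNumSgrp S) {k s : ℤ} (hk : k ∈ stdK S F) (hs : s ∈ S) :
    k + s ∈ stdK S F :=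
  ⟨by linarith [hk.1, hS.2.2.1 s hs], fun h => hk.2 (by simpa [sub_add] using hS.2.1 _ h _ hs)⟩

theorem subI_stdK_eq (hS : IsNumSgrp S) (hF : IsFrobOf S F) {I : Set ℤ}
    (hI : ∀ i ∈ I, ∀ s ∈ S, i + s ∈ I) : subI (stdK S F) I = {z | F - z ∉ I} := by
  ext z
  constructor
  · intro hz hmem
    exact (hz _ hmem).2 (by simpa using hS.1)
  · intro hz i hi
    have hzi : F - (z + i) ∉ S := fun h => hz (by convert hI i hi _ h using 1; ring)
    exact ⟨not_lt.mp fun hlt => hzi (hF.2 _ (by linarith)), hzi⟩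

theorem subI_stdK_stdK (hS : IsNumSgrp S) (hF : IsFrobOf S F) :
    subI (stdK S F) (stdK S F) = S := by
  rw [hS.subI_stdK_eq hF fun k hk s hs => hS.stdK_add_mem hk hs]
  ext z
  simp only [stdK, mem_ofPred_eq, not_and, not_not, sub_sub_cancel]
  exact ⟨fun h => (le_or_gt 0 (F - z)).elim h fun hlt => hF.2 z (by linarith), fun hz _ => hz⟩

theorem subI_stdK_eq_compl (hS : IsNumSgrp S) (hF : IsFrobOf S F) :
    subI S (stdK S F) = {z | F - z ∉ stdK S F + stdK S F} := by
  calc subI S (stdK S F) = subI (subI (stdK S F) (stdK S F)) (stdK S F) := by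
        rw [hS.subI_stdK_stdK hF]
    _ = subI (stdK S F) (stdK S F + stdK S F) := subI_subI _ _ _
    _ = {z | F - z ∉ stdK S F + stdK S F} := by
        refine hS.subI_stdK_eq hF ?_
        rintro _ ⟨a, ha, b, hb, rfl⟩ s hs
        exact ⟨a, ha, b + s, hS.stdK_add_mem hb hs, by ring⟩

theorem stdK_add_stdK_diff (hS : IsNumSgrp S) (hF : IsFrobOf S F) :
    (stdK S F + stdK S F) \ stdK S F = (fun x => F - x) '' (S \ subI S (stdK S F)) := by
  ext z
  have hKK : z ∈ stdK S F + stdK S F ↔ F - z ∉ subI S (stdK S F) := by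
    rw [hS.subI_stdK_eq_compl hF]
    simp
  rw [mem_sdiff, hKK]
  constructor
  · rintro ⟨hT, hzK⟩
    have hz : 0 ≤ z := not_lt.mp fun hz => hT (mem_subI_stdK_of_lt hF (by linarith))
    exact ⟨F - z, ⟨not_not.mp fun h => hzK ⟨hz, h⟩, hT⟩, by ring⟩
  · rintro ⟨x, ⟨hx, hxT⟩, rfl⟩
    rw [sub_sub_cancel]
    exact ⟨hxT, fun h => h.2 (by simpa using hx)⟩

theorem stdK_add_stdK_eq_iff (hS : IsNumSgrp S) (hF : IsFrobOf S F) :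
    stdK S F + stdK S F = stdK S F ↔ S = stdK S F := by
  have h0 : (0 : ℤ) ∈ stdK S F := hS.subset_stdK hF.1 hS.1
  constructor
  · intro h
    exact (hS.subset_stdK hF.1).antisymm
      ((add_subset_iff_subset_subI.mp h.subset).trans (hS.subI_stdK_stdK hF).subset)
  · intro h
    exact (add_subset_iff_subset_subI.mpr ((hS.subI_stdK_stdK hF).trans h).ge).antisymm
      fun k hk => ⟨k, hk, 0, h0, add_zero k⟩

theorem subI_stdK_subset (hS : IsNumSgrp S) (hF : IsFrobOf S F) : subI S (stdK S F) ⊆ S :=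
  fun t ht => by simpa using ht 0 (hS.subset_stdK hF.1 hS.1)

theorem subI_stdK_subset_maxId (hS : IsNumSgrp S) (hF : IsFrobOf S F) (hne : S ≠ stdK S F) :
    subI S (stdK S F) ⊆ maxId S := by
  refine fun t ht => mem_maxId.mpr ⟨hS.subI_stdK_subset hF ht, ?_⟩
  rintro rfl
  exact hne ((hS.subset_stdK hF.1).antisymm fun k hk => by simpa using ht k hk)

theorem frob_nonneg_of_ne (hS : IsNumSgrp S) (hF : IsFrobOf S F) (hne : S ≠ stdK S F) : 0 ≤ F :=
  not_lt.mp fun hF0 => hne <| (hS.subset_stdK hF.1).antisymm fun k hk => hF.2 k (by linarith [hk.1])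

theorem subI_maxId_maxId_eq (hS : IsNumSgrp S) (hF : IsFrobOf S F) (hne : S ≠ stdK S F) :
    subI (maxId S) (maxId S) = subI S (maxId S) := by
  refine Subset.antisymm (fun z h m hm => (h m hm).1) fun z hz m hm => mem_maxId.mpr ⟨hz m hm, ?_⟩
  intro hzm
  have hm0 := hS.pos_of_mem_maxId hm
  have hFm : F + m ∈ maxId S :=
    mem_maxId.mpr ⟨hF.2 _ (by linarith), by linarith [hS.frob_nonneg_of_ne hF hne]⟩
  have h := hz _ hFm
  rw [add_left_comm, hzm, add_zero] at h
  exact hF.1 h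

theorem add_mem_subI_stdK (hS : IsNumSgrp S) {f m : ℤ} (hf : f ∈ subI S (maxId S))
    (hm : m ∈ maxId S) (hmT : m ∈ subI S (stdK S F)) : f + m ∈ subI S (stdK S F) := by
  intro k hk
  have hmk : m + k ∈ maxId S :=
    mem_maxId.mpr ⟨hmT k hk, by linarith [hS.pos_of_mem_maxId hm, hk.1]⟩
  simpa [add_assoc] using hf _ hmk

theorem add_maxId_subset_iff (hS : IsNumSgrp S) {T : Set ℤ} :
    maxId S + maxId S ⊆ T ↔ ∀ x ∈ maxId S \ T, IsMinGen S x := by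
  constructor
  · exact fun h x hx => ⟨hx.1, fun hxx => hx.2 (h hxx)⟩
  · intro h w hw
    by_contra hwT
    exact (h w ⟨hS.add_maxId_subset hw, hwT⟩).2 hw

theorem subI_maxId_eq_union_iff (hS : IsNumSgrp S) {T : Set ℤ} (hT : T ⊆ S) :
    subI S (maxId S) = subI T (maxId S) ∪ {0} ↔
      maxId S ⊆ subI T (maxId S) ∧ PF S S ⊆ subI T (maxId S) := by
  constructor
  · intro h
    have hmem : ∀ z ∈ subI S (maxId S), z ≠ 0 → z ∈ subI T (maxId S) := fun z hz hz0 =>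
      (h ▸ hz : z ∈ subI T (maxId S) ∪ {0}).resolve_right hz0
    exact ⟨fun m hm => hmem m (fun m' hm' => hS.2.1 m hm.1 m' hm'.1) (mem_maxId.mp hm).2,
      fun f hf => hmem f hf.1 fun hf0 => hf.2 (hf0 ▸ hS.1)⟩
  · rintro ⟨hM, hPF⟩
    ext z
    constructor
    · intro hz
      by_cases hz0 : z = 0
      · exact Or.inr hz0
      by_cases hzS : z ∈ S
      · exact Or.inl (hM (mem_maxId.mpr ⟨hzS, hz0⟩))
      · exact Or.inl (hPF ⟨hz, hzS⟩)
    · rintro (hz | rfl)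
      · exact fun m hm => hT (hz m hm)
      · exact fun m hm => by simpa using hm.1

theorem PF_subset_subI_iff (hS : IsNumSgrp S) (hF : IsFrobOf S F) (hne : S ≠ stdK S F) :
    PF S S ⊆ subI (subI S (stdK S F)) (maxId S) ↔
      ∀ x ∈ maxId S \ subI S (stdK S F), ∀ y ∈ maxId S \ subI S (stdK S F), x - y ∉ PF S S := by
  constructor
  · rintro h x hx y hy hxy
    exact hx.2 (by simpa using h hxy y hy.1)
  · intro h f hf m hm
    by_contra hfm
    have hmT : m ∉ subI S (stdK S F) := fun hmT => hfm (hS.add_mem_subI_stdK hf.1 hm hmT)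
    have hfmM : f + m ∈ maxId S := (hS.subI_maxId_maxId_eq hF hne ▸ hf.1) m hm
    exact h (f + m) ⟨hfmM, hfm⟩ m ⟨hm, hmT⟩ (by simpa using hf)

theorem isGAS_iff_of_ne (hS : IsNumSgrp S) (hF : IsFrobOf S F) (hne : S ≠ stdK S F) :
    IsGAS S F ↔ (∀ x ∈ maxId S \ subI S (stdK S F), IsMinGen S x) ∧
      ∀ x ∈ maxId S \ subI S (stdK S F), ∀ y ∈ maxId S \ subI S (stdK S F), x - y ∉ PF S S := by
  have hfin : (maxId S \ subI S (stdK S F)).Finite := by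
    refine (finite_Icc 0 F).subset fun x hx => ⟨hS.2.2.1 x hx.1.1, ?_⟩
    exact not_lt.mp fun hlt => hx.2 (mem_subI_stdK_of_lt hF hlt)
  have h0T : (0 : ℤ) ∉ subI S (stdK S F) := fun h => (hS.subI_stdK_subset_maxId hF hne h).2 rfl
  have hST : S \ subI S (stdK S F) = maxId S \ subI S (stdK S F) ∪ {0} := by
    ext x
    by_cases hx : x = 0
    · simp [hx, hS.1, h0T]
    · simp [hx, maxId]
  rw [IsGAS, hS.stdK_add_stdK_eq_iff hF, hS.stdK_add_stdK_diff hF, hST, image_union,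
    image_singleton, sub_zero, iff_false_intro hne, false_or]
  constructor
  · rintro ⟨X, hgen, hpf, hX⟩
    rw [image_sub_union_singleton_inj (fun h => h.1.2 rfl) fun h => (hgen 0 h).1.2 rfl] at hX
    rw [hX]
    exact ⟨hgen, hpf⟩
  · rintro ⟨hgen, hpf⟩
    exact ⟨hfin.toFinset, by simpa using hgen, by simpa using hpf, by simp⟩

end IsNumSgrp

theorem stmt11 (S : Set ℤ) (hS : IsNumSgrp S) (F : ℤ) (hF : IsFrobOf S F) :
    IsGAS S F ↔ (S = stdK S F ∨
      (maxId S + maxId S ⊆ subI S (stdK S F) ∧ subI S (stdK S F) ⊆ maxId S ∧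
       subI (maxId S) (maxId S) = subI (subI S (stdK S F)) (maxId S) ∪ {0})) := by
  by_cases hsym : S = stdK S F
  · exact iff_of_true (Or.inl ((hS.stdK_add_stdK_eq_iff hF).mpr hsym)) (Or.inl hsym)
  rw [hS.isGAS_iff_of_ne hF hsym, ← hS.add_maxId_subset_iff, ← hS.PF_subset_subI_iff hF hsym,
    hS.subI_maxId_maxId_eq hF hsym, hS.subI_maxId_eq_union_iff (hS.subI_stdK_subset hF),
    ← add_subset_iff_subset_subI (A := maxId S) (T := subI S (stdK S F))]
  have hTM := hS.subI_stdK_subset_maxId hF hsym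
  tauto
end

section
/- Suppose 2K \ K = {F(S) − x₁, …, F(S) − x_r, F(S)} where each x_i is a minimal generator of S. If F(S) − x ∈ nK \ (n−1)K for some n > 2 and x = s₁ + s₂ with s₁, s₂ ∈ M, then F(S) − s₁ ∈ (n−1)K. -/
open Set Pointwise

/-!
Write `F - x = a + (k₁ + k₂)` with `a ∈ (n-2)K` and `k₁, k₂ ∈ K`. As `F - x ∉ (n-1)K`, the sum
`k₁ + k₂` lies in `2K \ K`, and it is not `F` because `x > 0`; so `k₁ + k₂ = F - j` with `j` a
minimal generator. Adding `s₂` to it stays in `K`, and `F - s₁ = a + (k₁ + k₂ + s₂)`.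
-/

section NumericalSemigroup

variable {S : Set ℤ}

lemma pos_of_mem_maxId (hS : IsNumSgrp S) {s : ℤ} (hs : s ∈ maxId S) : 0 < s :=
  lt_of_le_of_ne (hS.2.2.1 s hs.1) (Ne.symm hs.2)

lemma add_mem_stdK (hS : IsNumSgrp S) {F k s : ℤ} (hk : k ∈ stdK S F) (hs : s ∈ S) :
    k + s ∈ stdK S F := by
  refine ⟨add_nonneg hk.1 (hS.2.2.1 s hs), fun hks => hk.2 ?_⟩
  simpa [sub_add_cancel, sub_add_eq_sub_sub] using hS.2.1 _ hks s hs

lemma nonneg_of_mem_nK {K : Set ℤ} (hK : ∀ k ∈ K, 0 ≤ k) :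
    ∀ m, ∀ y ∈ nK K m, 0 ≤ y
  | 0, y, hy => (mem_singleton_iff.mp hy).ge
  | 1, y, hy => hK y hy
  | m + 2, _, hy => by
    obtain ⟨a, ha, k, hk, rfl⟩ := mem_add.mp hy
    exact add_nonneg (nonneg_of_mem_nK hK (m + 1) a ha) (hK k hk)

lemma exists_of_mem_nK_add_three {K : Set ℤ} {m : ℕ} {y : ℤ} (hy : y ∈ nK K (m + 3)) :
    ∃ a ∈ nK K (m + 1), ∃ k₁ ∈ K, ∃ k₂ ∈ K, y = a + (k₁ + k₂) := by
  obtain ⟨b, hb, k₂, hk₂, rfl⟩ := mem_add.mp hy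
  obtain ⟨a, ha, k₁, hk₁, rfl⟩ := mem_add.mp hb
  exact ⟨a, ha, k₁, hk₁, k₂, hk₂, add_assoc a k₁ k₂⟩

variable {F : ℤ} {X : Finset ℤ}
  (h2K : (stdK S F + stdK S F) \ stdK S F = (fun x => F - x) '' (X : Set ℤ) ∪ {F})
include h2K

lemma exists_eq_sub_of_mem_add_stdK {y : ℤ} (hy : y ∈ stdK S F + stdK S F)
    (hyK : y ∉ stdK S F) (hyF : y ≠ F) : ∃ j ∈ X, y = F - j := by
  have : y ∈ (fun x => F - x) '' (X : Set ℤ) ∪ {F} := h2K ▸ ⟨hy, hyK⟩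
  rcases this with ⟨j, hj, rfl⟩ | hF
  · exact ⟨j, hj, rfl⟩
  · exact absurd hF hyF

/-- Otherwise `k₁ + (k₂ + s) ∈ 2K \ K` is `F - j'` for a minimal generator `j'`, and then
`j = j' + s ∈ M + M`. -/
lemma add_add_mem_stdK (hS : IsNumSgrp S) (hX : ∀ x ∈ X, IsMinGen S x)
    {k₁ k₂ j s : ℤ} (hk₁ : k₁ ∈ stdK S F) (hk₂ : k₂ ∈ stdK S F) (hj : IsMinGen S j)
    (hkj : k₁ + k₂ = F - j) (hs : s ∈ maxId S) (hF : k₁ + k₂ + s ≠ F) :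
    k₁ + k₂ + s ∈ stdK S F := by
  by_contra hK
  have hsum : k₁ + k₂ + s ∈ stdK S F + stdK S F := by
    rw [add_assoc]
    exact add_mem_add hk₁ (add_mem_stdK hS hk₂ hs.1)
  obtain ⟨j', hj', hj'eq⟩ := exists_eq_sub_of_mem_add_stdK h2K hsum hK hF
  exact hj.2 (mem_add.mpr ⟨j', (hX j' hj').1, s, hs, by linarith⟩)

end NumericalSemigroup

theorem stmt12_general (S : Set ℤ) (hS : IsNumSgrp S) (F : ℤ)
    (X : Finset ℤ) (hX : ∀ x ∈ X, IsMinGen S x)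
    (h2K : (stdK S F + stdK S F) \ stdK S F = (fun x => F - x) '' (X : Set ℤ) ∪ {F})
    (n : ℕ) (hn : 2 < n) (x s₁ s₂ : ℤ) (hx : x = s₁ + s₂)
    (hs₁ : s₁ ∈ maxId S) (hs₂ : s₂ ∈ maxId S)
    (hmem : F - x ∈ nK (stdK S F) n \ nK (stdK S F) (n - 1)) :
    F - s₁ ∈ nK (stdK S F) (n - 1) := by
  obtain ⟨m, rfl⟩ : ∃ m, n = m + 3 := ⟨n - 3, by omega⟩
  obtain ⟨hin, hout⟩ := hmem
  obtain ⟨a, ha, k₁, hk₁, k₂, hk₂, hdec⟩ := exists_of_mem_nK_add_three hin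
  have ha0 : 0 ≤ a := nonneg_of_mem_nK (fun k hk => hk.1) (m + 1) a ha
  have hs₁0 := pos_of_mem_maxId hS hs₁
  have hs₂0 := pos_of_mem_maxId hS hs₂
  have hk₁₂ : k₁ + k₂ ∉ stdK S F := fun hk => hout (hdec ▸ add_mem_add ha hk)
  obtain ⟨j, hj, hkj⟩ := exists_eq_sub_of_mem_add_stdK h2K (add_mem_add hk₁ hk₂) hk₁₂
    (by omega)
  have hk : k₁ + k₂ + s₂ ∈ stdK S F :=
    add_add_mem_stdK h2K hS hX hk₁ hk₂ (hX j hj) hkj hs₂ (by omega)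
  have : F - s₁ = a + (k₁ + k₂ + s₂) := by omega
  exact this ▸ add_mem_add ha hk

theorem stmt12 (S : Set ℤ) (hS : IsNumSgrp S) (F : ℤ) (hF : IsFrobOf S F)
    (X : Finset ℤ) (hX : ∀ x ∈ X, IsMinGen S x)
    (h2K : (stdK S F + stdK S F) \ stdK S F = (fun x => F - x) '' (X : Set ℤ) ∪ {F})
    (n : ℕ) (hn : 2 < n) (x s₁ s₂ : ℤ) (hx : x = s₁ + s₂)
    (hs₁ : s₁ ∈ maxId S) (hs₂ : s₂ ∈ maxId S)
    (hmem : F - x ∈ nK (stdK S F) n \ nK (stdK S F) (n - 1)) :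
    F - s₁ ∈ nK (stdK S F) (n - 1) :=
  stmt12_general S hS F X hX h2K n hn x s₁ s₂ hx hs₁ hs₂ hmem
end
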